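/- arXiv:2102.00979 — 4 statements merged into one kernel-verified Lean document; each statement's English description precedes it below -/
import Mathlib

section
/- For all λ, α ∈ ℂ∖{0} and β, γ ∈ ℂ, the 𝔏-modules Ω(λ,α,β,γ) and Δ(λ,α,β,γ) are irreducible; and the 𝔏-module Θ(λ,α,β,γ) is irreducible if and only if 2β is not a nonnegative integer. -/
open scoped TensorProduct

noncomputable section

/-- The affine-Virasoro algebra of type `A₁`: a complex Lie algebra `L` equipped with a
basis `{e_i, f_i, h_i, d_i (i ∈ ℤ), C}` subject to the defining bracket relations. -/
structure AVAlgebra (L : Type) [LieRing L] [LieAlgebra ℂ L] where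
  e : ℤ → L
  f : ℤ → L
  h : ℤ → L
  d : ℤ → L
  cC : L
  bracket_ef : ∀ i j : ℤ, ⁅e i, f j⁆ = h (i + j) + (if i + j = 0 then (i : ℂ) • cC else 0)
  bracket_he : ∀ i j : ℤ, ⁅h i, e j⁆ = (2 : ℂ) • e (i + j)
  bracket_hf : ∀ i j : ℤ, ⁅h i, f j⁆ = (-2 : ℂ) • f (i + j)
  bracket_dd : ∀ i j : ℤ, ⁅d i, d j⁆ = ((j : ℂ) - (i : ℂ)) • d (i + j)
      + (if i + j = 0 then (((i : ℂ) ^ 3 - (i : ℂ)) / 12) • cC else 0)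
  bracket_dh : ∀ i j : ℤ, ⁅d i, h j⁆ = (j : ℂ) • h (i + j)
  bracket_hh : ∀ i j : ℤ, ⁅h i, h j⁆ = (if i + j = 0 then ((-2 : ℂ) * (i : ℂ)) • cC else 0)
  bracket_de : ∀ i j : ℤ, ⁅d i, e j⁆ = (j : ℂ) • e (i + j)
  bracket_df : ∀ i j : ℤ, ⁅d i, f j⁆ = (j : ℂ) • f (i + j)
  bracket_ee : ∀ i j : ℤ, ⁅e i, e j⁆ = 0
  bracket_ff : ∀ i j : ℤ, ⁅f i, f j⁆ = 0
  central : ∀ x : L, ⁅cC, x⁆ = 0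
  indep : LinearIndependent ℂ
    (Sum.elim (fun q : Fin 4 × ℤ => ![e, f, h, d] q.1 q.2) fun _ : Unit => cC)
  spans : Submodule.span ℂ
    (Set.range (Sum.elim (fun q : Fin 4 × ℤ => ![e, f, h, d] q.1 q.2) fun _ : Unit => cC)) = ⊤

/-- The polynomial ring ℂ[s,t]. -/
abbrev Pst : Type := MvPolynomial (Fin 2) ℂ

/-- The variable `s` of ℂ[s,t]. -/
def sVar : Pst := MvPolynomial.X 0

/-- The variable `t` of ℂ[s,t]. -/
def tVar : Pst := MvPolynomial.X 1

/-- The substitution operator `g(s,t) ↦ g(s-a, t-b)` on ℂ[s,t]. -/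
def shiftST (a b : ℂ) : Module.End ℂ Pst :=
  (MvPolynomial.aeval ![sVar - MvPolynomial.C a, tVar - MvPolynomial.C b]).toLinearMap

/-- The operator by which `d_i` acts on each of `Ω(λ,α,β,γ)`, `Δ(λ,α,β,γ)`, `Θ(λ,α,β,γ)`:
`g(s,t) ↦ λ^i (s+iγ) g(s-i,t)`. -/
def dOp (lam ga : ℂ) (i : ℤ) : Module.End ℂ Pst :=
  lam ^ i • (LinearMap.mulLeft ℂ (sVar + MvPolynomial.C ((i : ℂ) * ga)) ∘ₗ shiftST i 0)

/-- The operator by which `h_i` acts: `g(s,t) ↦ λ^i t g(s-i,t)`. -/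
def hOp (lam : ℂ) (i : ℤ) : Module.End ℂ Pst :=
  lam ^ i • (LinearMap.mulLeft ℂ tVar ∘ₗ shiftST i 0)

/-- The operator by which `e_i` acts on `Ω(λ,α,β,γ)`: `g(s,t) ↦ λ^i α g(s-i,t-2)`. -/
def omegaE (lam al : ℂ) (i : ℤ) : Module.End ℂ Pst :=
  (lam ^ i * al) • shiftST i 2

/-- The operator by which `f_i` acts on `Ω(λ,α,β,γ)`:
`g(s,t) ↦ -(λ^i/α)(t/2-β)(t/2+β+1) g(s-i,t+2)`. -/
def omegaF (lam al be : ℂ) (i : ℤ) : Module.End ℂ Pst :=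
  (-(lam ^ i / al)) • (LinearMap.mulLeft ℂ
    ((MvPolynomial.C (2⁻¹ : ℂ) * tVar - MvPolynomial.C be) *
      (MvPolynomial.C (2⁻¹ : ℂ) * tVar + MvPolynomial.C (be + 1))) ∘ₗ shiftST i (-2))

/-- The operator by which `e_i` acts on `Δ(λ,α,β,γ)`:
`g(s,t) ↦ -(λ^i/α)(t/2+β)(t/2-β-1) g(s-i,t-2)`. -/
def deltaE (lam al be : ℂ) (i : ℤ) : Module.End ℂ Pst :=
  (-(lam ^ i / al)) • (LinearMap.mulLeft ℂ
    ((MvPolynomial.C (2⁻¹ : ℂ) * tVar + MvPolynomial.C be) *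
      (MvPolynomial.C (2⁻¹ : ℂ) * tVar - MvPolynomial.C (be + 1))) ∘ₗ shiftST i 2)

/-- The operator by which `f_i` acts on `Δ(λ,α,β,γ)`: `g(s,t) ↦ λ^i α g(s-i,t+2)`. -/
def deltaF (lam al : ℂ) (i : ℤ) : Module.End ℂ Pst :=
  (lam ^ i * al) • shiftST i (-2)

/-- The operator by which `e_i` acts on `Θ(λ,α,β,γ)`: `g(s,t) ↦ λ^i α (t/2+β) g(s-i,t-2)`. -/
def thetaE (lam al be : ℂ) (i : ℤ) : Module.End ℂ Pst :=
  (lam ^ i * al) • (LinearMap.mulLeft ℂ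
    (MvPolynomial.C (2⁻¹ : ℂ) * tVar + MvPolynomial.C be) ∘ₗ shiftST i 2)

/-- The operator by which `f_i` acts on `Θ(λ,α,β,γ)`: `g(s,t) ↦ -(λ^i/α)(t/2-β) g(s-i,t+2)`. -/
def thetaF (lam al be : ℂ) (i : ℤ) : Module.End ℂ Pst :=
  (-(lam ^ i / al)) • (LinearMap.mulLeft ℂ
    (MvPolynomial.C (2⁻¹ : ℂ) * tVar - MvPolynomial.C be) ∘ₗ shiftST i (-2))

/-- `M` is an 𝔏-module whose underlying space is ℂ[s,t] (via the linear equivalence `φ`) and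
on which the basis elements of 𝔏 act by the prescribed families of operators (`C` acting by
zero). -/
def ActsAs {L : Type} [LieRing L] [LieAlgebra ℂ L] (A : AVAlgebra L)
    (M : Type) [AddCommGroup M] [Module ℂ M] [LieRingModule L M]
    (φ : M ≃ₗ[ℂ] Pst) (Fe Ff Fh Fd : ℤ → Module.End ℂ Pst) : Prop :=
  (∀ (i : ℤ) (m : M), φ ⁅A.e i, m⁆ = Fe i (φ m)) ∧
  (∀ (i : ℤ) (m : M), φ ⁅A.f i, m⁆ = Ff i (φ m)) ∧
  (∀ (i : ℤ) (m : M), φ ⁅A.h i, m⁆ = Fh i (φ m)) ∧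
  (∀ (i : ℤ) (m : M), φ ⁅A.d i, m⁆ = Fd i (φ m)) ∧
  (∀ m : M, ⁅A.cC, m⁆ = 0)

/-- `M` is (a copy of) the 𝔏-module `Ω(λ,α,β,γ)`. -/
def IsOmega {L : Type} [LieRing L] [LieAlgebra ℂ L] (A : AVAlgebra L)
    (lam al be ga : ℂ) (M : Type) [AddCommGroup M] [Module ℂ M] [LieRingModule L M]
    (φ : M ≃ₗ[ℂ] Pst) : Prop :=
  ActsAs A M φ (omegaE lam al) (omegaF lam al be) (hOp lam) (dOp lam ga)

/-- `M` is (a copy of) the 𝔏-module `Δ(λ,α,β,γ)`. -/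
def IsDelta {L : Type} [LieRing L] [LieAlgebra ℂ L] (A : AVAlgebra L)
    (lam al be ga : ℂ) (M : Type) [AddCommGroup M] [Module ℂ M] [LieRingModule L M]
    (φ : M ≃ₗ[ℂ] Pst) : Prop :=
  ActsAs A M φ (deltaE lam al be) (deltaF lam al) (hOp lam) (dOp lam ga)

/-- `M` is (a copy of) the 𝔏-module `Θ(λ,α,β,γ)`. -/
def IsTheta {L : Type} [LieRing L] [LieAlgebra ℂ L] (A : AVAlgebra L)
    (lam al be ga : ℂ) (M : Type) [AddCommGroup M] [Module ℂ M] [LieRingModule L M]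
    (φ : M ≃ₗ[ℂ] Pst) : Prop :=
  ActsAs A M φ (thetaE lam al be) (thetaF lam al be) (hOp lam) (dOp lam ga)

/-! Multiplication by `s` and `t` (the actions of `d₀` and `h₀`) makes every submodule `W` of
`ℂ[s,t]` an ideal. In `ℂ[t][s]` the operators `e_i` of `Ω`, `f_i` of `Δ` and `e_i`, `f_i` of `Θ`
act, up to nonzero scalars, as `g ↦ m(t) g(s - i, t ∓ 2)`; differences over `i` lower the `s`-degree, so a nonzero `W`
contains a nonzero `p(t)`, hence all `m(t) m(t ∓ 2) ⋯ p(t ∓ 2k)`. A common zero `z` of all of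
these must be a zero of `m` at some `z ∓ 2j`. For `Ω` and `Δ`, `m = 1`: no common zero, so
`1 ∈ W`. For `Θ` the multipliers `t/2 + β` and `t/2 - β` would need `z - 2j₁ = -2β` and
`z + 2j₂ = 2β`, i.e. `2β = j₁ + j₂`. Conversely, if `2β = k ∈ ℕ`, the multiples of
`∏_{j ≤ k} (t/2 - β + j)` form a proper nonzero submodule of `Θ`. -/

open Polynomial

namespace Polynomial

theorem exists_taylor_ne {R : Type*} [CommRing R] [IsDomain R] {S : Set R} (hS : S.Infinite)
    {u : R[X]} (hu : u.natDegree ≠ 0) : ∃ r ∈ S, taylor r u ≠ u := by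
  by_contra! h
  refine hu ?_
  rw [eq_of_infinite_eval_eq u (C (u.eval 0)) (hS.mono fun r hr => ?_), natDegree_C]
  simpa [taylor_eval] using congrArg (eval 0) (h r hr)

theorem natDegree_taylor_sub_lt {R : Type*} [CommRing R] {u : R[X]} (hu : u.natDegree ≠ 0)
    (r : R) : (taylor r u - u).natDegree < u.natDegree := by
  rcases eq_or_ne (taylor r u - u) 0 with h | h
  · rw [h, natDegree_zero]; exact Nat.pos_of_ne_zero hu
  refine natDegree_lt_natDegree h ?_
  have hu0 : taylor r u ≠ 0 := fun h0 => hu (by rw [← natDegree_taylor u r, h0, natDegree_zero])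
  simpa [degree_taylor] using
    degree_sub_lt_left (degree_taylor u r) hu0 (leadingCoeff_taylor r u)

end Polynomial

namespace Ideal

variable {K : Type*} [Field K]

theorem exists_eval_eq_zero_of_mul_taylor_mem [CharZero K] {J : Ideal K[X]} (hJ : J ≠ ⊥)
    {m : K[X]} {c : K} (hc : c ≠ 0) (hT : ∀ r ∈ J, m * taylor (-c) r ∈ J) {z : K}
    (hz : ∀ r ∈ J, r.eval z = 0) : ∃ j : ℕ, m.eval (z - j * c) = 0 := by
  by_contra! hm
  have hroots : ∀ k : ℕ, ∀ r ∈ J, r.eval (z - k * c) = 0 := by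
    intro k
    induction k with
    | zero => simpa using hz
    | succ k ih =>
      intro r hr
      have := ih _ (hT r hr)
      rw [eval_mul, taylor_eval, mul_eq_zero] at this
      simpa [add_mul, ← sub_eq_add_neg, sub_sub] using this.resolve_left (hm k)
  obtain ⟨r, hr, hr0⟩ := Submodule.exists_mem_ne_zero_of_ne_bot hJ
  refine hr0 (eq_zero_of_infinite_isRoot r
    (Set.infinite_of_injective_forall_mem (f := fun k : ℕ => z - k * c) ?_ fun k => hroots k r hr))
  intro a b hab
  simpa [hc] using hab

theorem exists_forall_eval_eq_zero [IsAlgClosed K] {J : Ideal K[X]} (hJ : J ≠ ⊤) :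
    ∃ z, ∀ r ∈ J, r.eval z = 0 := by
  set g := Submodule.IsPrincipal.generator J
  have hg : ¬IsUnit g := fun hu =>
    hJ (eq_top_of_isUnit_mem _ (Submodule.IsPrincipal.generator_mem J) hu)
  by_cases hg0 : g = 0
  · refine ⟨0, fun r hr => ?_⟩
    rw [(Submodule.IsPrincipal.eq_bot_iff_generator_eq_zero J).2 hg0, mem_bot] at hr
    simp [hr]
  obtain ⟨z, hz⟩ := IsAlgClosed.exists_root _ (degree_pos_of_ne_zero_of_nonunit hg0 hg).ne'
  exact ⟨z, fun r hr => hz.dvd ((Submodule.IsPrincipal.mem_iff_generator_dvd J).1 hr)⟩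

end Ideal

theorem MvPolynomial.mul_mem_of_forall_X_mul_mem {σ R : Type*} [CommSemiring R]
    {W : Submodule R (MvPolynomial σ R)} (hX : ∀ i, ∀ w ∈ W, X i * w ∈ W)
    (a : MvPolynomial σ R) {w : MvPolynomial σ R} (hw : w ∈ W) : a * w ∈ W := by
  induction a using MvPolynomial.induction_on generalizing w with
  | C r => simpa [MvPolynomial.C_mul'] using W.smul_mem r hw
  | add p q hp hq => rw [add_mul]; exact W.add_mem (hp hw) (hq hw)
  | mul_X p i hp => rw [mul_assoc]; exact hp (hX i w hw)

def invtSubmodules (F : ℤ → Module.End ℂ Pst) : Set (Submodule ℂ Pst) :=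
  {W | ∀ i, W ∈ (F i).invtSubmodule}

lemma LieSubmodule.map_mem_invtSubmodules {L M : Type} [LieRing L] [AddCommGroup M]
    [Module ℂ M] [LieRingModule L M] {φ : M ≃ₗ[ℂ] Pst} {x : ℤ → L} {F : ℤ → Module.End ℂ Pst}
    (hx : ∀ i m, φ ⁅x i, m⁆ = F i (φ m)) (N : LieSubmodule ℂ L M) :
    (N : Submodule ℂ M).map (φ : M →ₗ[ℂ] Pst) ∈ invtSubmodules F := by
  rintro i _ ⟨m, hm, rfl⟩
  exact ⟨_, N.lie_mem hm, hx i m⟩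

namespace ActsAs

variable {L : Type} [LieRing L] [LieAlgebra ℂ L] {A : AVAlgebra L}
  {M : Type} [AddCommGroup M] [Module ℂ M] [LieRingModule L M]
  {φ : M ≃ₗ[ℂ] Pst} {Fe Ff Fh Fd : ℤ → Module.End ℂ Pst}

def lieSubmoduleOfInvariant [LieModule ℂ L M] (h : ActsAs A M φ Fe Ff Fh Fd)
    (W : Submodule ℂ Pst) (he : W ∈ invtSubmodules Fe) (hf : W ∈ invtSubmodules Ff)
    (hh : W ∈ invtSubmodules Fh) (hd : W ∈ invtSubmodules Fd) : LieSubmodule ℂ L M where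
  toSubmodule := W.comap (φ : M →ₗ[ℂ] Pst)
  lie_mem {x m} hm := by
    have hx : x ∈ Submodule.span ℂ (Set.range (Sum.elim
        (fun q : Fin 4 × ℤ => ![A.e, A.f, A.h, A.d] q.1 q.2) fun _ : Unit => A.cC)) := by
      rw [A.spans]; trivial
    induction hx using Submodule.span_induction with
    | mem x hx =>
      obtain ⟨⟨k, i⟩ | -, rfl⟩ := hx
      · fin_cases k
        · simpa [h.1 i m] using he i hm
        · simpa [h.2.1 i m] using hf i hm
        · simpa [h.2.2.1 i m] using hh i hm
        · simpa [h.2.2.2.1 i m] using hd i hm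
      · simp [h.2.2.2.2 m]
    | zero => simp
    | add x y _ _ hx hy => simpa using W.add_mem hx hy
    | smul c x _ hx => simpa using W.smul_mem c hx

theorem isIrreducible_iff [LieModule ℂ L M] (h : ActsAs A M φ Fe Ff Fh Fd) :
    LieModule.IsIrreducible ℂ L M ↔ ∀ W : Submodule ℂ Pst, W ∈ invtSubmodules Fe →
      W ∈ invtSubmodules Ff → W ∈ invtSubmodules Fh → W ∈ invtSubmodules Fd →
      W = ⊥ ∨ W = ⊤ := by
  constructor
  · intro hirr W he hf hh hd
    set N := h.lieSubmoduleOfInvariant W he hf hh hd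
    rcases hirr.eq_bot_or_eq_top N with hN | hN
    · refine Or.inl ((Submodule.eq_bot_iff W).2 fun w hw => φ.symm.injective ?_)
      have : φ.symm w ∈ N := by simpa [N, lieSubmoduleOfInvariant] using hw
      simpa [hN] using this
    · refine Or.inr (Submodule.eq_top_iff'.2 fun w => ?_)
      have : φ.symm w ∈ N := hN ▸ LieSubmodule.mem_top _
      simpa [N, lieSubmoduleOfInvariant] using this
  · intro hW
    have : Nontrivial M := φ.toEquiv.nontrivial
    refine LieModule.IsIrreducible.mk fun N hN => ?_
    rcases hW _ (N.map_mem_invtSubmodules h.1) (N.map_mem_invtSubmodules h.2.1)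
      (N.map_mem_invtSubmodules h.2.2.1) (N.map_mem_invtSubmodules h.2.2.2.1) with hbot | htop
    · refine absurd ((LieSubmodule.eq_bot_iff N).2 fun m hm => φ.injective ?_) hN
      simpa using (Submodule.eq_bot_iff _).1 hbot (φ m) ⟨m, hm, rfl⟩
    · refine eq_top_iff.2 fun m _ => ?_
      obtain ⟨n, hn, hnm⟩ := Submodule.eq_top_iff'.1 htop (φ m)
      exact φ.injective hnm ▸ hn

end ActsAs

-- `ℂ[t][s]`: the outer variable is `s`, so `natDegree` is the `s`-degree
abbrev Pts : Type := ℂ[X][X]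

def stEquiv : Pst ≃ₐ[ℂ] Pts :=
  (MvPolynomial.finSuccEquiv ℂ 1).trans (mapAlgEquiv (MvPolynomial.uniqueAlgEquiv ℂ (Fin 1)))

@[simp] lemma stEquiv_X_zero : stEquiv (MvPolynomial.X 0) = X := by
  simp [stEquiv, MvPolynomial.finSuccEquiv_X_zero]

@[simp] lemma stEquiv_X_one : stEquiv (MvPolynomial.X 1) = C X := by
  have h := MvPolynomial.finSuccEquiv_X_succ (R := ℂ) (n := 1) (j := 0)
  simp only [Fin.succ_zero_eq_one] at h
  simp [stEquiv, h]

@[simp] lemma stEquiv_C (z : ℂ) : stEquiv (MvPolynomial.C z) = C (C z) :=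
  stEquiv.commutes z

-- `g(s, t) ↦ g(s - a, t - c)`, the counterpart of `shiftST a c`
def shiftA (a c : ℂ) : Pts →ₐ[ℂ] Pts :=
  ((taylorAlgHom (-C a)).restrictScalars ℂ).comp (mapAlgHom (taylorAlgHom (-c)))

lemma shiftA_apply (a c : ℂ) (g : Pts) :
    shiftA a c g = taylor (-C a) (g.map (taylorAlgHom (-c) : ℂ[X] →+* ℂ[X])) := rfl

@[simp] lemma shiftA_C (a c : ℂ) (r : ℂ[X]) : shiftA a c (C r) = C (taylor (-c) r) := by
  simp [shiftA_apply]

@[simp] lemma shiftA_X (a c : ℂ) : shiftA a c X = X - C (C a) := by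
  simp [shiftA_apply, sub_eq_add_neg]

lemma shiftA_eq_taylor (a c : ℂ) (g : Pts) : shiftA a c g = taylor (-C a) (shiftA 0 c g) := by
  simp [shiftA_apply]

lemma natDegree_shiftA (a c : ℂ) (g : Pts) : (shiftA a c g).natDegree = g.natDegree := by
  rw [shiftA_apply, natDegree_taylor]
  exact natDegree_map_eq_of_injective (taylor_injective _) g

lemma stEquiv_shiftST (a b : ℂ) (w : Pst) :
    stEquiv (shiftST a b w) = shiftA a b (stEquiv w) := by
  have : (stEquiv : Pst →ₐ[ℂ] Pts).comp
      (MvPolynomial.aeval ![sVar - MvPolynomial.C a, tVar - MvPolynomial.C b])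
      = (shiftA a b).comp stEquiv := by
    apply MvPolynomial.algHom_ext
    intro i
    fin_cases i <;> simp [sVar, tVar, sub_eq_add_neg]
  exact AlgHom.congr_fun this w

def halfXAdd (c : ℂ) : ℂ[X] := C 2⁻¹ * X + C c

lemma halfXAdd_ne_zero (c : ℂ) : halfXAdd c ≠ 0 :=
  ne_zero_of_degree_gt (n := 0) (by rw [halfXAdd, degree_linear (by norm_num)]; exact zero_lt_one)

lemma stEquiv_omegaE (lam al : ℂ) (i : ℤ) (w : Pst) :
    stEquiv (omegaE lam al i w) = (lam ^ i * al) • shiftA i 2 (stEquiv w) := by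
  simp [omegaE, stEquiv_shiftST]

lemma stEquiv_deltaF (lam al : ℂ) (i : ℤ) (w : Pst) :
    stEquiv (deltaF lam al i w) = (lam ^ i * al) • shiftA i (-2) (stEquiv w) := by
  simp [deltaF, stEquiv_shiftST]

lemma stEquiv_thetaE (lam al be : ℂ) (i : ℤ) (w : Pst) :
    stEquiv (thetaE lam al be i w)
      = (lam ^ i * al) • (C (halfXAdd be) * shiftA i 2 (stEquiv w)) := by
  simp [thetaE, halfXAdd, stEquiv_shiftST, tVar]

lemma stEquiv_thetaF (lam al be : ℂ) (i : ℤ) (w : Pst) :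
    stEquiv (thetaF lam al be i w)
      = (-(lam ^ i / al)) • (C (halfXAdd (-be)) * shiftA i (-2) (stEquiv w)) := by
  simp [thetaF, halfXAdd, stEquiv_shiftST, tVar, sub_eq_add_neg]

lemma stEquiv_hOp (lam : ℂ) (i : ℤ) (w : Pst) :
    stEquiv (hOp lam i w) = lam ^ i • (C X * shiftA i 0 (stEquiv w)) := by
  simp [hOp, stEquiv_shiftST, tVar]

lemma stEquiv_dOp (lam ga : ℂ) (i : ℤ) (w : Pst) :
    stEquiv (dOp lam ga i w) = lam ^ i • ((X + C (C (i * ga))) * shiftA i 0 (stEquiv w)) := by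
  simp [dOp, stEquiv_shiftST, sVar]

section ShiftStableIdeal

variable {I : Ideal Pts} {m : ℂ[X]} {c : ℂ}

theorem comap_C_ne_bot_of_shift_mem (hI : I ≠ ⊥) (hm : m ≠ 0)
    (hT : ∀ i : ℤ, ∀ g ∈ I, C m * shiftA i c g ∈ I) : I.comap (C : ℂ[X] →+* Pts) ≠ ⊥ := by
  obtain ⟨g, hg, hg0⟩ := Submodule.exists_mem_ne_zero_of_ne_bot hI
  induction hn : g.natDegree using Nat.strong_induction_on generalizing g with
  | _ n ih =>
  rcases eq_or_ne n 0 with rfl | hn0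
  · rw [eq_C_of_natDegree_eq_zero hn] at hg hg0
    exact (Submodule.ne_bot_iff _).2 ⟨_, hg, by simpa using hg0⟩
  have hu : (shiftA 0 c g).natDegree = n := (natDegree_shiftA 0 c g).trans hn
  have hS : (Set.range fun i : ℤ => -C (i : ℂ)).Infinite :=
    Set.infinite_range_of_injective fun a b h => by simpa using h
  obtain ⟨_, ⟨i, rfl⟩, hi⟩ := exists_taylor_ne hS (hu ▸ hn0)
  -- the difference of two `s`-shifts lowers the `s`-degree
  have hv : C m * (taylor (-C (i : ℂ)) (shiftA 0 c g) - shiftA 0 c g) ∈ I := by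
    have := I.sub_mem (hT i g hg) (hT 0 g hg)
    rwa [Int.cast_zero, ← mul_sub, shiftA_eq_taylor (i : ℂ)] at this
  refine ih _ ?_ _ hv (mul_ne_zero (C_ne_zero.2 hm) (sub_ne_zero.2 hi)) rfl
  rw [natDegree_C_mul hm, ← hu]
  exact natDegree_taylor_sub_lt (hu ▸ hn0) _

theorem exists_eval_eq_zero_of_shift_mem (hI : I ≠ ⊥) (hm : m ≠ 0) (hc : c ≠ 0)
    (hT : ∀ i : ℤ, ∀ g ∈ I, C m * shiftA i c g ∈ I) {z : ℂ}
    (hz : ∀ r ∈ I.comap (C : ℂ[X] →+* Pts), r.eval z = 0) :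
    ∃ j : ℕ, m.eval (z - j * c) = 0 :=
  (I.comap (C : ℂ[X] →+* Pts)).exists_eval_eq_zero_of_mul_taylor_mem
    (comap_C_ne_bot_of_shift_mem hI hm hT) hc (fun r hr => by simpa using hT 0 (C r) hr) hz

theorem exists_forall_eval_comap_C_eq_zero (hI : I ≠ ⊤) :
    ∃ z : ℂ, ∀ r ∈ I.comap (C : ℂ[X] →+* Pts), r.eval z = 0 :=
  Ideal.exists_forall_eval_eq_zero (mt (Ideal.comap_eq_top_iff (f := C)).1 hI)

theorem eq_top_of_shift_mem (hI : I ≠ ⊥) (hc : c ≠ 0)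
    (hT : ∀ i : ℤ, ∀ g ∈ I, shiftA i c g ∈ I) : I = ⊤ := by
  by_contra hI'
  obtain ⟨z, hz⟩ := exists_forall_eval_comap_C_eq_zero hI'
  obtain ⟨j, hj⟩ := exists_eval_eq_zero_of_shift_mem hI one_ne_zero hc (by simpa using hT) hz
  simp at hj

theorem eq_top_of_halfXAdd_shift_mem {be : ℂ} (hbe : ¬∃ k : ℕ, 2 * be = k) (hI : I ≠ ⊥)
    (hE : ∀ i : ℤ, ∀ g ∈ I, C (halfXAdd be) * shiftA i 2 g ∈ I)
    (hF : ∀ i : ℤ, ∀ g ∈ I, C (halfXAdd (-be)) * shiftA i (-2) g ∈ I) : I = ⊤ := by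
  by_contra hI'
  obtain ⟨z, hz⟩ := exists_forall_eval_comap_C_eq_zero hI'
  obtain ⟨j₁, h₁⟩ := exists_eval_eq_zero_of_shift_mem hI (halfXAdd_ne_zero _) two_ne_zero hE hz
  obtain ⟨j₂, h₂⟩ :=
    exists_eval_eq_zero_of_shift_mem hI (halfXAdd_ne_zero _) (neg_ne_zero.2 two_ne_zero) hF hz
  simp only [halfXAdd, eval_add, eval_mul, eval_C, eval_X] at h₁ h₂
  exact hbe ⟨j₁ + j₂, by push_cast; linear_combination h₁ - h₂⟩

end ShiftStableIdeal

lemma shiftST_zero : shiftST 0 0 = LinearMap.id := by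
  have : ![sVar, tVar] = MvPolynomial.X := by
    ext i : 1; fin_cases i <;> simp [sVar, tVar]
  rw [shiftST, map_zero, sub_zero, sub_zero, this, MvPolynomial.aeval_X_left]
  rfl

lemma dOp_zero_apply (lam ga : ℂ) (w : Pst) : dOp lam ga 0 w = sVar * w := by
  simp [dOp, shiftST_zero]

lemma hOp_zero_apply (lam : ℂ) (w : Pst) : hOp lam 0 w = tVar * w := by
  simp [hOp, shiftST_zero]

theorem eq_top_of_ideal_eq_top {lam ga : ℂ} {W : Submodule ℂ Pst}
    (hh : W ∈ invtSubmodules (hOp lam)) (hd : W ∈ invtSubmodules (dOp lam ga)) (hW : W ≠ ⊥)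
    (h : ∀ I : Ideal Pts, I ≠ ⊥ → (∀ w, stEquiv w ∈ I ↔ w ∈ W) → I = ⊤) : W = ⊤ := by
  have hmul : ∀ a, ∀ w ∈ W, a * w ∈ W := fun a w hw =>
    MvPolynomial.mul_mem_of_forall_X_mul_mem (fun i w hw => by
      fin_cases i
      · simpa [dOp_zero_apply, sVar] using hd 0 hw
      · simpa [hOp_zero_apply, tVar] using hh 0 hw) a hw
  let I : Ideal Pts :=
    Ideal.comap (stEquiv.symm : Pts →+* Pst) { W.toAddSubmonoid with smul_mem' := hmul }
  have hI : ∀ w, stEquiv w ∈ I ↔ w ∈ W := fun w => by simp [I]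
  obtain ⟨w, hw, hw0⟩ := Submodule.exists_mem_ne_zero_of_ne_bot hW
  have hI_top := h I ((Submodule.ne_bot_iff I).2 ⟨_, (hI w).2 hw, by simpa using hw0⟩) hI
  exact Submodule.eq_top_iff'.2 fun w => (hI w).1 (hI_top ▸ Submodule.mem_top)

theorem apply_mem_of_mem_invtSubmodules {W : Submodule ℂ Pst} {I : Ideal Pts}
    (hI : ∀ w, stEquiv w ∈ I ↔ w ∈ W) {F : ℤ → Module.End ℂ Pst} (hW : W ∈ invtSubmodules F)
    {u : ℤ → ℂ} (hu : ∀ i, u i ≠ 0) {G : ℤ → Pts → Pts}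
    (hF : ∀ i w, stEquiv (F i w) = u i • G i (stEquiv w)) (i : ℤ) {g : Pts} (hg : g ∈ I) :
    G i g ∈ I := by
  obtain ⟨w, rfl⟩ := stEquiv.surjective g
  have := (hI _).2 (hW i ((hI w).1 hg))
  rw [hF] at this
  simpa [hu i] using I.smul_of_tower_mem (u i)⁻¹ this

lemma taylor_halfXAdd (r c : ℂ) : taylor r (halfXAdd c) = halfXAdd (c + 2⁻¹ * r) := by
  simp only [halfXAdd, map_add, taylor_mul, taylor_X, taylor_C, C_mul]
  ring

lemma taylor_prod_halfXAdd (r : ℂ) (s : Finset ℕ) (f : ℕ → ℂ) :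
    taylor r (∏ j ∈ s, halfXAdd (f j)) = ∏ j ∈ s, halfXAdd (f j + 2⁻¹ * r) := by
  change taylorAlgHom r _ = _
  rw [map_prod]
  simp [taylor_halfXAdd]

-- vanishes at `t = 2β - 2j` for `0 ≤ j ≤ k`: for `2β = k` these are the weights
-- `k, k - 2, …, -k` of the `(k + 1)`-dimensional `sl₂`-module
def weightPoly (be : ℂ) (k : ℕ) : ℂ[X] := ∏ j ∈ Finset.range (k + 1), halfXAdd (j - be)

lemma weightPoly_dvd_halfXAdd_mul_taylor_neg_two {be : ℂ} {k : ℕ} (hk : 2 * be = k) :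
    weightPoly be k ∣ halfXAdd be * taylor (-2) (weightPoly be k) := by
  set f : ℕ → ℂ[X] := fun j => halfXAdd (j - 1 - be)
  have hP : weightPoly be k = ∏ j ∈ Finset.range (k + 1), f (j + 1) := by
    simp [weightPoly, f]
  have hshift : taylor (-2) (weightPoly be k) = ∏ j ∈ Finset.range (k + 1), f j := by
    rw [weightPoly, taylor_prod_halfXAdd]; congr! 2; ring
  have hbe : halfXAdd be = f (k + 1) := by
    simp only [f]; congr 1; push_cast; linear_combination hk
  refine ⟨f 0, ?_⟩
  rw [hshift, hbe, mul_comm, ← Finset.prod_range_succ, Finset.prod_range_succ', hP]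

lemma weightPoly_dvd_halfXAdd_mul_taylor_two (be : ℂ) (k : ℕ) :
    weightPoly be k ∣ halfXAdd (-be) * taylor 2 (weightPoly be k) := by
  set f : ℕ → ℂ[X] := fun j => halfXAdd (j - be)
  have hshift : taylor 2 (weightPoly be k) = ∏ j ∈ Finset.range (k + 1), f (j + 1) := by
    rw [weightPoly, taylor_prod_halfXAdd]; congr! 2; push_cast; ring
  refine ⟨f (k + 1), ?_⟩
  rw [hshift, show halfXAdd (-be) = f 0 by simp [f], mul_comm, ← Finset.prod_range_succ',
    Finset.prod_range_succ]
  rfl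

lemma weightPoly_ne_zero (be : ℂ) (k : ℕ) : weightPoly be k ≠ 0 :=
  Finset.prod_ne_zero_iff.2 fun _ _ => halfXAdd_ne_zero _

lemma not_isUnit_weightPoly (be : ℂ) (k : ℕ) : ¬IsUnit (weightPoly be k) := by
  intro h
  have : (weightPoly be k).eval (2 * be) = 0 := by
    rw [weightPoly, eval_prod]
    exact Finset.prod_eq_zero (i := 0) (by simp) (by simp [halfXAdd])
  exact (h.map (evalRingHom (2 * be))).ne_zero this

def tMultiples (P : ℂ[X]) : Submodule ℂ Pst :=
  ((Ideal.span {(C P : Pts)}).comap stEquiv).restrictScalars ℂ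

lemma mem_tMultiples {P : ℂ[X]} {w : Pst} : w ∈ tMultiples P ↔ C P ∣ stEquiv w := by
  simp [tMultiples, Ideal.mem_span_singleton]

theorem tMultiples_mem_invtSubmodules {P : ℂ[X]} {F : ℤ → Module.End ℂ Pst} {u : ℤ → ℂ}
    {a : ℤ → Pts} {c : ℂ} (hF : ∀ i w, stEquiv (F i w) = u i • (a i * shiftA i c (stEquiv w)))
    (hP : ∀ i, C P ∣ a i * C (taylor (-c) P)) : tMultiples P ∈ invtSubmodules F := by
  intro i w hw
  rw [mem_tMultiples] at hw
  rw [Submodule.mem_comap, mem_tMultiples, hF, Algebra.smul_def]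
  refine dvd_mul_of_dvd_right ((hP i).trans (mul_dvd_mul_left _ ?_)) _
  simpa using map_dvd (shiftA i c) hw

section Irreducibility

variable {L : Type} [LieRing L] [LieAlgebra ℂ L] {A : AVAlgebra L} {lam al be ga : ℂ}
  {M : Type} [AddCommGroup M] [Module ℂ M] [LieRingModule L M] [LieModule ℂ L M]
  {φ : M ≃ₗ[ℂ] Pst}

theorem IsOmega.isIrreducible (hlam : lam ≠ 0) (hal : al ≠ 0)
    (hO : IsOmega A lam al be ga M φ) : LieModule.IsIrreducible ℂ L M := by
  refine (ActsAs.isIrreducible_iff hO).2 fun W he _ hh hd => or_iff_not_imp_left.2 fun hW =>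
    eq_top_of_ideal_eq_top hh hd hW fun I hI hIW => eq_top_of_shift_mem hI two_ne_zero ?_
  exact apply_mem_of_mem_invtSubmodules hIW he (fun i => mul_ne_zero (zpow_ne_zero i hlam) hal)
    (G := fun i => shiftA i 2) (stEquiv_omegaE lam al)

theorem IsDelta.isIrreducible (hlam : lam ≠ 0) (hal : al ≠ 0)
    (hD : IsDelta A lam al be ga M φ) : LieModule.IsIrreducible ℂ L M := by
  refine (ActsAs.isIrreducible_iff hD).2 fun W _ hf hh hd => or_iff_not_imp_left.2 fun hW =>
    eq_top_of_ideal_eq_top hh hd hW fun I hI hIW =>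
      eq_top_of_shift_mem hI (neg_ne_zero.2 two_ne_zero) ?_
  exact apply_mem_of_mem_invtSubmodules hIW hf (fun i => mul_ne_zero (zpow_ne_zero i hlam) hal)
    (G := fun i => shiftA i (-2)) (stEquiv_deltaF lam al)

theorem IsTheta.isIrreducible (hlam : lam ≠ 0) (hal : al ≠ 0) (hbe : ¬∃ k : ℕ, 2 * be = k)
    (hT : IsTheta A lam al be ga M φ) : LieModule.IsIrreducible ℂ L M := by
  refine (ActsAs.isIrreducible_iff hT).2 fun W he hf hh hd => or_iff_not_imp_left.2 fun hW =>
    eq_top_of_ideal_eq_top hh hd hW fun I hI hIW => eq_top_of_halfXAdd_shift_mem hbe hI ?_ ?_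
  · exact apply_mem_of_mem_invtSubmodules hIW he
      (fun i => mul_ne_zero (zpow_ne_zero i hlam) hal)
      (G := fun i g => C (halfXAdd be) * shiftA i 2 g) (stEquiv_thetaE lam al be)
  · exact apply_mem_of_mem_invtSubmodules hIW hf
      (fun i => neg_ne_zero.2 (div_ne_zero (zpow_ne_zero i hlam) hal))
      (G := fun i g => C (halfXAdd (-be)) * shiftA i (-2) g) (stEquiv_thetaF lam al be)

theorem IsTheta.not_isIrreducible {k : ℕ} (hk : 2 * be = k) (hT : IsTheta A lam al be ga M φ) :
    ¬LieModule.IsIrreducible ℂ L M := by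
  have he : tMultiples (weightPoly be k) ∈ invtSubmodules (thetaE lam al be) :=
    tMultiples_mem_invtSubmodules (a := fun _ => C (halfXAdd be)) (stEquiv_thetaE lam al be)
      fun _ => by
        rw [← map_mul]
        exact map_dvd (C : ℂ[X] →+* Pts) (weightPoly_dvd_halfXAdd_mul_taylor_neg_two hk)
  have hf : tMultiples (weightPoly be k) ∈ invtSubmodules (thetaF lam al be) :=
    tMultiples_mem_invtSubmodules (a := fun _ => C (halfXAdd (-be))) (stEquiv_thetaF lam al be)
      fun _ => by
        rw [← map_mul, neg_neg]
        exact map_dvd (C : ℂ[X] →+* Pts) (weightPoly_dvd_halfXAdd_mul_taylor_two be k)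
  have hh : tMultiples (weightPoly be k) ∈ invtSubmodules (hOp lam) :=
    tMultiples_mem_invtSubmodules (a := fun _ => C X) (stEquiv_hOp lam) fun _ => by simp
  have hd : tMultiples (weightPoly be k) ∈ invtSubmodules (dOp lam ga) :=
    tMultiples_mem_invtSubmodules (a := fun i => X + C (C (i * ga))) (stEquiv_dOp lam ga)
      fun _ => by simp
  intro hirr
  rcases (ActsAs.isIrreducible_iff hT).1 hirr _ he hf hh hd with h | h
  · have : stEquiv.symm (C (weightPoly be k)) ∈ tMultiples (weightPoly be k) :=
      mem_tMultiples.2 (by simp)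
    rw [h, Submodule.mem_bot, map_eq_zero_iff _ stEquiv.symm.injective, C_eq_zero] at this
    exact weightPoly_ne_zero be k this
  · have : (1 : Pst) ∈ tMultiples (weightPoly be k) := h ▸ Submodule.mem_top
    rw [mem_tMultiples, map_one, ← isUnit_iff_dvd_one, isUnit_C] at this
    exact not_isUnit_weightPoly be k this

end Irreducibility

/-- `Ω(λ,α,β,γ)` and `Δ(λ,α,β,γ)` are irreducible; `Θ(λ,α,β,γ)` is irreducible
iff `2β` is not a nonnegative integer. -/
theorem stmt_0 {L : Type} [LieRing L] [LieAlgebra ℂ L] (A : AVAlgebra L)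
    (lam al be ga : ℂ) (hlam : lam ≠ 0) (hal : al ≠ 0)
    (MO : Type) [AddCommGroup MO] [Module ℂ MO] [LieRingModule L MO] [LieModule ℂ L MO] (φO : MO ≃ₗ[ℂ] Pst) (hO : IsOmega A lam al be ga MO φO)
    (MD : Type) [AddCommGroup MD] [Module ℂ MD] [LieRingModule L MD] [LieModule ℂ L MD] (φD : MD ≃ₗ[ℂ] Pst) (hD : IsDelta A lam al be ga MD φD)
    (MT : Type) [AddCommGroup MT] [Module ℂ MT] [LieRingModule L MT] [LieModule ℂ L MT] (φT : MT ≃ₗ[ℂ] Pst) (hT : IsTheta A lam al be ga MT φT) :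
    LieModule.IsIrreducible ℂ L MO ∧ LieModule.IsIrreducible ℂ L MD ∧
      (LieModule.IsIrreducible ℂ L MT ↔ ¬∃ k : ℕ, 2 * be = (k : ℂ)) :=
  ⟨hO.isIrreducible hlam hal, hD.isIrreducible hlam hal,
    fun hirr ⟨_, hk⟩ => hT.not_isIrreducible hk hirr, hT.isIrreducible hlam hal⟩
end
end

section
/- Let λ ∈ ℂ∖{0} and γ ∈ ℂ, and for each i ∈ ℤ let D_i be the linear operator on the polynomial ring ℂ[s,t] defined by (D_i g)(s,t) = λ^i (s + iγ) g(s−i, t). Then for every integer r > 2 and all l, m ∈ ℤ, the operator ∑_{i=0}^{r} C(r,i) (−1)^{r−i} D_{l−m−i} ∘ D_{m+i} is zero on ℂ[s,t], where C(r,i) denotes the binomial coefficient. -/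
/-!
Both shifts in `D_{l-m-i} ∘ D_{m+i}` add up to the fixed shift `s ↦ s - l`, and the scalars to
`λ^l`, so this operator is `g ↦ λ^l F(i) g(s-l,t)` for a polynomial `F` in `i` of degree `2`
with coefficients in `ℂ[s,t]`. The sum in question is the `r`-th forward difference of `F` at
`0`, which vanishes because `r > 2`.
-/

open scoped TensorProduct

noncomputable section

open MvPolynomial Finset

theorem Polynomial.sum_range_choose_smul_eval_eq_zero {K R : Type*} [CommRing K] [CommRing R]
    [Algebra K R] (P : Polynomial R) {r : ℕ} (hr : P.natDegree < r) :
    ∑ i ∈ range (r + 1), ((r.choose i : K) * (-1) ^ (r - i)) • P.eval (i : R) = 0 := by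
  have := congr_fun (P.fwdDiff_iter_eq_zero_of_degree_lt hr) 0
  simp only [fwdDiff_iter_eq_sum_shift, zero_add, nsmul_one, Pi.zero_apply] at this
  rw [← this]
  refine sum_congr rfl fun i _ => ?_
  rw [← Int.cast_smul_eq_zsmul K]
  push_cast
  rw [mul_comm]

lemma shiftST_sVar (a b : ℂ) : shiftST a b sVar = sVar - C a := by
  simp [shiftST, sVar]

lemma shiftST_C (a b c : ℂ) : shiftST a b (C c) = C c := by
  simp [shiftST]

lemma shiftST_mul (a b : ℂ) (p q : Pst) : shiftST a b (p * q) = shiftST a b p * shiftST a b q := by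
  simp [shiftST]

lemma shiftST_comp_shiftST (a b a' b' : ℂ) :
    shiftST a b ∘ₗ shiftST a' b' = shiftST (a + a') (b + b') := by
  unfold shiftST
  rw [← AlgHom.comp_toLinearMap]
  congr 1
  refine MvPolynomial.algHom_ext fun i => ?_
  fin_cases i <;> simp [sVar, tVar] <;> ring

lemma dOp_comp_dOp (lam ga : ℂ) (a b : ℤ) :
    dOp lam ga a ∘ₗ dOp lam ga b = (lam ^ a * lam ^ b) •
      (LinearMap.mul ℂ Pst).compl₂ (shiftST (a + b) 0)
        ((sVar + C (a * ga)) * (sVar - C (a : ℂ) + C (b * ga))) := by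
  refine LinearMap.ext fun g => ?_
  rw [← add_zero (0 : ℂ), ← shiftST_comp_shiftST]
  simp only [dOp, LinearMap.smul_apply, LinearMap.comp_apply, LinearMap.mulLeft_apply,
    LinearMap.compl₂_apply, LinearMap.mul_apply', map_smul, shiftST_mul, map_add, shiftST_sVar,
    shiftST_C, smul_smul, mul_assoc]
  rw [mul_comm (lam ^ b)]

/-- for `r > 2` the operator `∑_{i=0}^r C(r,i)(−1)^{r−i} D_{l−m−i} ∘ D_{m+i}`
vanishes on ℂ[s,t]. -/
theorem stmt_9 (lam ga : ℂ) (hlam : lam ≠ 0) (r : ℕ) (hr : 2 < r) (l m : ℤ) :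
    ∑ i ∈ Finset.range (r + 1), ((r.choose i : ℂ) * (-1) ^ (r - i)) •
      (dOp lam ga (l - m - (i : ℤ)) ∘ₗ dOp lam ga (m + (i : ℤ))) = 0 := by
  let F : Polynomial Pst :=
    (Polynomial.C (sVar + C ((l - m) * ga)) - Polynomial.X * Polynomial.C (C ga)) *
      (Polynomial.C (sVar - C (l - m : ℂ) + C (m * ga)) + Polynomial.X * Polynomial.C (C (1 + ga)))
  have hF : F.natDegree < r := by
    have : F.natDegree ≤ 2 := by unfold F; compute_degree
    omega
  have hterm (i : ℕ) : dOp lam ga (l - m - i) ∘ₗ dOp lam ga (m + i) =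
      lam ^ l • (LinearMap.mul ℂ Pst).compl₂ (shiftST (l : ℂ) 0) (F.eval (i : Pst)) := by
    rw [dOp_comp_dOp, ← zpow_add₀ hlam]
    simp only [F, Polynomial.eval_mul, Polynomial.eval_add, Polynomial.eval_sub,
      Polynomial.eval_C, Polynomial.eval_X]
    push_cast
    simp only [map_sub, map_add, map_mul, map_natCast, map_one]
    ring_nf
  simp only [hterm, smul_comm _ (lam ^ l), ← smul_sum, ← map_smul, ← map_sum,
    Polynomial.sum_range_choose_smul_eval_eq_zero F hF, map_zero, smul_zero]

end
end

section
/- Let λ, α ∈ ℂ∖{0}, β, γ, η, ε, θ ∈ ℂ with (η,ε,θ) ≠ (0,0,0), let M(λ,α,β,γ) be any one of the 𝔏-modules Ω(λ,α,β,γ), Δ(λ,α,β,γ), Θ(λ,α,β,γ), and let V(η,ε,θ) be an irreducible highest weight 𝔏-module with highest weight (η,ε,θ). Then for all λ', α' ∈ ℂ∖{0} and β', γ' ∈ ℂ, the tensor product 𝔏-module M(λ,α,β,γ) ⊗ V(η,ε,θ) is not isomorphic to any of Ω(λ',α',β',γ'), Δ(λ',α',β',γ'), Θ(λ',α',β',γ').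 -/
/-!
On each of `Ω`, `Δ`, `Θ` the central element `C` acts by `0`, and so does the second difference
`d₂h₀ - 2d₁h₁ + d₀h₂`: `d_i h_j` acts by `g ↦ λ^(i+j) (s + iγ) t g(s-i-j, t)`, and for `i + j = 2`
the factors `s + 2γ`, `s + γ`, `s` cancel with weights `1, -2, 1`. On `M ⊗ V`, for the highest
weight vector `v` and `m ∈ M` corresponding to `1 ∈ ℂ[s,t]`, `C` sends `m ⊗ v` to `θ (m ⊗ v)` and
the second difference sends it to `(ε d₂ m + η h₂ m) ⊗ v`, which corresponds to
`λ² (ε (s + 2γ) + η t) ⊗ v`. Both vanish only if `(η, ε, θ) = 0`.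
-/

open scoped TensorProduct

noncomputable section

/-- `v` is a highest weight vector of weight `(η, ε, θ)`. -/
def IsHWVector {L : Type} [LieRing L] [LieAlgebra ℂ L] (A : AVAlgebra L)
    (V : Type) [AddCommGroup V] [Module ℂ V] [LieRingModule L V]
    (eta eps th : ℂ) (v : V) : Prop :=
  ⁅A.e 0, v⁆ = 0 ∧
  (∀ i : ℤ, 1 ≤ i → ⁅A.e i, v⁆ = 0 ∧ ⁅A.f i, v⁆ = 0 ∧ ⁅A.h i, v⁆ = 0 ∧ ⁅A.d i, v⁆ = 0) ∧
  ⁅A.d 0, v⁆ = eta • v ∧ ⁅A.h 0, v⁆ = eps • v ∧ ⁅A.cC, v⁆ = th • v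

/-- `V` is an irreducible highest weight 𝔏-module with highest weight `(η, ε, θ)`: it is
irreducible and generated by a nonzero highest weight vector of weight `(η, ε, θ)`. -/
def IsIrrHW {L : Type} [LieRing L] [LieAlgebra ℂ L] (A : AVAlgebra L)
    (V : Type) [AddCommGroup V] [Module ℂ V] [LieRingModule L V] [LieModule ℂ L V]
    (eta eps th : ℂ) : Prop :=
  LieModule.IsIrreducible ℂ L V ∧
  ∃ v : V, v ≠ 0 ∧ LieSubmodule.lieSpan ℂ L ({v} : Set V) = ⊤ ∧ IsHWVector A V eta eps th v

open MvPolynomial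

lemma shiftST_shiftST (a c : ℂ) (g : Pst) :
    shiftST a 0 (shiftST c 0 g) = shiftST (a + c) 0 g := by
  simp only [shiftST, AlgHom.toLinearMap_apply, ← AlgHom.comp_apply, comp_aeval]
  congr 2
  funext i
  fin_cases i <;> simp [sVar, tVar, sub_sub]

lemma shiftST_tVar_mul (a : ℂ) (g : Pst) :
    shiftST a 0 (tVar * g) = tVar * shiftST a 0 g := by
  simp [shiftST, tVar]

lemma dOp_hOp (lam ga : ℂ) (i j : ℤ) (g : Pst) :
    dOp lam ga i (hOp lam j g) =
      lam ^ i • lam ^ j • ((sVar + C ((i : ℂ) * ga)) * (tVar * shiftST ((i : ℂ) + j) 0 g)) := by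
  simp only [dOp, hOp, LinearMap.smul_apply, LinearMap.comp_apply, LinearMap.mulLeft_apply,
    map_smul, shiftST_tVar_mul, shiftST_shiftST]
  exact smul_comm _ _ _

lemma dOp_hOp_secondDiff_eq_zero (lam ga : ℂ) (g : Pst) :
    dOp lam ga 2 (hOp lam 0 g) - (2 : ℂ) • dOp lam ga 1 (hOp lam 1 g)
      + dOp lam ga 0 (hOp lam 2 g) = 0 := by
  simp only [dOp_hOp, Int.cast_ofNat, Int.cast_one, Int.cast_zero, add_zero, zero_add,
    one_add_one_eq_two, zpow_ofNat, smul_eq_C_mul, map_pow, map_ofNat, map_mul, map_zero, map_one]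
  ring

lemma eq_zero_of_smul_dOp_one_add_smul_hOp_one_eq_zero {lam ga eps eta : ℂ} (hlam : lam ≠ 0)
    (h : eps • dOp lam ga 2 1 + eta • hOp lam 2 1 = 0) : eps = 0 ∧ eta = 0 := by
  have key (x : Fin 2 → ℂ) : eps * (x 0 + 2 * ga) + eta * x 1 = 0 := by
    have := congrArg (eval x) h
    simp only [dOp, hOp, LinearMap.smul_apply, LinearMap.comp_apply, AlgHom.toLinearMap_apply,
      shiftST, map_one, LinearMap.mulLeft_apply, mul_one, smul_eq_C_mul, map_add, map_mul, eval_C,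
      sVar, tVar, eval_X, map_zero, zpow_ofNat, Int.cast_ofNat] at this
    exact mul_left_cancel₀ (pow_ne_zero 2 hlam) (by linear_combination this)
  constructor
  · simpa using key ![1 - 2 * ga, 0]
  · simpa using key ![- 2 * ga, 1]

lemma TensorProduct.tmul_eq_zero_iff {K M N : Type*} [Field K] [AddCommGroup M] [Module K M]
    [AddCommGroup N] [Module K N] {m : M} {n : N} : m ⊗ₜ[K] n = 0 ↔ m = 0 ∨ n = 0 := by
  refine ⟨fun h => or_iff_not_imp_right.2 fun hn => ?_, ?_⟩
  · obtain ⟨f, hf⟩ := (LinearMap.toSpanSingleton K N n).exists_leftInverse_of_injective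
      (LinearMap.ker_toSpanSingleton K hn)
    have hfn : f n = 1 := by simpa using LinearMap.congr_fun hf 1
    simpa [hfn] using congrArg ((TensorProduct.rid K M).toLinearMap ∘ₗ LinearMap.lTensor M f) h
  · rintro (rfl | rfl) <;> simp

section

variable {L : Type} [LieRing L] [LieAlgebra ℂ L] (A : AVAlgebra L)
  {M : Type} [AddCommGroup M] [Module ℂ M] [LieRingModule L M]

def AVAlgebra.secondDiff (m : M) : M :=
  ⁅A.d 2, ⁅A.h 0, m⁆⁆ - (2 : ℂ) • ⁅A.d 1, ⁅A.h 1, m⁆⁆ + ⁅A.d 0, ⁅A.h 2, m⁆⁆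

variable {A}

lemma LieModuleHom.map_secondDiff {N : Type} [AddCommGroup N] [Module ℂ N] [LieRingModule L N]
    (f : M →ₗ⁅ℂ,L⁆ N) (m : M) : f (A.secondDiff m) = A.secondDiff (f m) := by
  simp [AVAlgebra.secondDiff]

lemma ActsAs.secondDiff_eq_zero {φ : M ≃ₗ[ℂ] Pst} {Fe Ff : ℤ → Module.End ℂ Pst} {lam ga : ℂ}
    (hM : ActsAs A M φ Fe Ff (hOp lam) (dOp lam ga)) (m : M) : A.secondDiff m = 0 := by
  obtain ⟨-, -, hh, hd, -⟩ := hM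
  apply φ.injective
  simpa [AVAlgebra.secondDiff, hh, hd] using dOp_hOp_secondDiff_eq_zero lam ga (φ m)

lemma ActsAs.eq_zero_of_smul_lie_d_add_smul_lie_h_eq_zero {φ : M ≃ₗ[ℂ] Pst}
    {Fe Ff : ℤ → Module.End ℂ Pst} {lam ga eps eta : ℂ}
    (hM : ActsAs A M φ Fe Ff (hOp lam) (dOp lam ga)) (hlam : lam ≠ 0)
    (h : eps • ⁅A.d 2, φ.symm 1⁆ + eta • ⁅A.h 2, φ.symm 1⁆ = 0) : eps = 0 ∧ eta = 0 := by
  obtain ⟨-, -, hh, hd, -⟩ := hM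
  refine eq_zero_of_smul_dOp_one_add_smul_hOp_one_eq_zero (ga := ga) hlam ?_
  simpa [hh, hd] using congrArg φ h

lemma exists_actsAs_hOp_dOp {φ : M ≃ₗ[ℂ] Pst} {lam al be ga : ℂ}
    (h : IsOmega A lam al be ga M φ ∨ IsDelta A lam al be ga M φ ∨ IsTheta A lam al be ga M φ) :
    ∃ Fe Ff, ActsAs A M φ Fe Ff (hOp lam) (dOp lam ga) := by
  rcases h with h | h | h <;> exact ⟨_, _, h⟩

variable [LieModule ℂ L M] {V : Type} [AddCommGroup V] [Module ℂ V] [LieRingModule L V]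
  [LieModule ℂ L V] {eta eps th : ℂ} {v : V}

lemma IsHWVector.lie_cC_tmul (hv : IsHWVector A V eta eps th v) (m : M) :
    ⁅A.cC, m ⊗ₜ[ℂ] v⁆ = ⁅A.cC, m⁆ ⊗ₜ v + th • m ⊗ₜ v := by
  rw [TensorProduct.LieModule.lie_tmul_right, hv.2.2.2.2, TensorProduct.tmul_smul]

lemma IsHWVector.secondDiff_tmul (hv : IsHWVector A V eta eps th v) (m : M) :
    A.secondDiff (m ⊗ₜ[ℂ] v) = (A.secondDiff m + eps • ⁅A.d 2, m⁆ + eta • ⁅A.h 2, m⁆) ⊗ₜ v := by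
  obtain ⟨-, hpos, hd0, hh0, -⟩ := hv
  obtain ⟨-, -, hh1, hd1⟩ := hpos 1 le_rfl
  obtain ⟨-, -, hh2, hd2⟩ := hpos 2 one_le_two
  simp only [AVAlgebra.secondDiff, TensorProduct.LieModule.lie_tmul_right, hd0, hh0, hd1, hh1,
    hd2, hh2, lie_add, lie_smul, TensorProduct.tmul_smul, TensorProduct.add_tmul,
    TensorProduct.sub_tmul, TensorProduct.smul_tmul', TensorProduct.tmul_zero, add_zero]
  abel

end

theorem stmt_11_general {L : Type} [LieRing L] [LieAlgebra ℂ L] (A : AVAlgebra L)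
    (lam al be ga eta eps th : ℂ) (hlam : lam ≠ 0)
    (hwt : (eta, eps, th) ≠ (0, 0, 0))
    (M : Type) [AddCommGroup M] [Module ℂ M] [LieRingModule L M] [LieModule ℂ L M] (φ : M ≃ₗ[ℂ] Pst)
    (hM : IsOmega A lam al be ga M φ ∨ IsDelta A lam al be ga M φ ∨
      IsTheta A lam al be ga M φ)
    (V : Type) [AddCommGroup V] [Module ℂ V] [LieRingModule L V] [LieModule ℂ L V] (hV : IsIrrHW A V eta eps th) :
    ∀ (M' : Type) (_ : AddCommGroup M') (_ : Module ℂ M') (_ : LieRingModule L M')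
      (_ : LieModule ℂ L M') (φ' : M' ≃ₗ[ℂ] Pst) (lam' al' be' ga' : ℂ),
      lam' ≠ 0 → al' ≠ 0 →
      (IsOmega A lam' al' be' ga' M' φ' ∨ IsDelta A lam' al' be' ga' M' φ' ∨
        IsTheta A lam' al' be' ga' M' φ') →
      IsEmpty ((M ⊗[ℂ] V) ≃ₗ⁅ℂ,L⁆ M') := by
  intro M' _ _ _ _ φ' lam' al' be' ga' _ _ hM'
  obtain ⟨_, _, hActs⟩ := exists_actsAs_hOp_dOp hM
  obtain ⟨_, _, hActs'⟩ := exists_actsAs_hOp_dOp hM'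
  obtain ⟨-, v, hv0, -, hv⟩ := hV
  refine ⟨fun ψ => hwt ?_⟩
  set m := φ.symm 1
  have hm0 : m ≠ 0 := by simp [m]
  have hC : ⁅A.cC, m ⊗ₜ[ℂ] v⁆ = 0 := ψ.injective <| by
    rw [← LieModuleEquiv.coe_coe, LieModuleHom.map_lie, hActs'.2.2.2.2, map_zero]
  have hS : A.secondDiff (m ⊗ₜ[ℂ] v) = 0 := ψ.injective <| by
    rw [← LieModuleEquiv.coe_coe, LieModuleHom.map_secondDiff, hActs'.secondDiff_eq_zero,
      map_zero]
  rw [hv.lie_cC_tmul, hActs.2.2.2.2, TensorProduct.zero_tmul, zero_add, smul_eq_zero,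
    TensorProduct.tmul_eq_zero_iff] at hC
  rw [hv.secondDiff_tmul, hActs.secondDiff_eq_zero, zero_add,
    TensorProduct.tmul_eq_zero_iff] at hS
  have hth : th = 0 := hC.resolve_right (not_or_intro hm0 hv0)
  obtain ⟨heps, heta⟩ :=
    hActs.eq_zero_of_smul_lie_d_add_smul_lie_h_eq_zero hlam (hS.resolve_right hv0)
  simp [heps, heta, hth]

/-- `M(λ,α,β,γ) ⊗ V(η,ε,θ)` is not isomorphic to any of the modules
`Ω(λ',α',β',γ')`, `Δ(λ',α',β',γ')`, `Θ(λ',α',β',γ')`. -/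
theorem stmt_11 {L : Type} [LieRing L] [LieAlgebra ℂ L] (A : AVAlgebra L)
    (lam al be ga eta eps th : ℂ) (hlam : lam ≠ 0) (hal : al ≠ 0)
    (hwt : (eta, eps, th) ≠ (0, 0, 0))
    (M : Type) [AddCommGroup M] [Module ℂ M] [LieRingModule L M] [LieModule ℂ L M] (φ : M ≃ₗ[ℂ] Pst)
    (hM : IsOmega A lam al be ga M φ ∨ IsDelta A lam al be ga M φ ∨
      IsTheta A lam al be ga M φ)
    (V : Type) [AddCommGroup V] [Module ℂ V] [LieRingModule L V] [LieModule ℂ L V] (hV : IsIrrHW A V eta eps th) :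
    ∀ (M' : Type) (_ : AddCommGroup M') (_ : Module ℂ M') (_ : LieRingModule L M')
      (_ : LieModule ℂ L M') (φ' : M' ≃ₗ[ℂ] Pst) (lam' al' be' ga' : ℂ),
      lam' ≠ 0 → al' ≠ 0 →
      (IsOmega A lam' al' be' ga' M' φ' ∨ IsDelta A lam' al' be' ga' M' φ' ∨
        IsTheta A lam' al' be' ga' M' φ') →
      IsEmpty ((M ⊗[ℂ] V) ≃ₗ⁅ℂ,L⁆ M') :=
  stmt_11_general A lam al be ga eta eps th hlam hwt M φ hM V hV

end
end

section
/- Let λ, α ∈ ℂ∖{0}, β, γ, η, ε, θ ∈ ℂ with (η,ε,θ) ≠ (0,0,0), let M(λ,α,β,γ) be any one of the 𝔏-modules Ω(λ,α,β,γ), Δ(λ,α,β,γ), Θ(λ,α,β,γ), and let V(η,ε,θ) be an irreducible highest weight 𝔏-module with highest weight (η,ε,θ). If W is any 𝔏-module such that for every w ∈ W there exists a positive integer i with d_i · w = 0, then W is not isomorphic to the tensor product 𝔏-module M(λ,α,β,γ) ⊗ V(η,ε,θ). In particular, M(λ,α,β,γ) ⊗ V(η,ε,θ) is not isomorphic to any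 quotient of a universal Whittaker 𝔏-module. -/
open scoped TensorProduct

noncomputable section

/-! In `M ⊗ V` the vector `1 ⊗ v`, with `v` a highest weight vector, is moved by every `d_i`:
`d_i` kills `v` for `i ≥ 1`, so `d_i (1 ⊗ v) = λ^i (s + iγ) ⊗ v`, which is nonzero because
`λ ≠ 0`. An isomorphism with `W` would transport this vector to one killed by some `d_i`. -/

lemma dOp_apply_one (lam ga : ℂ) (i : ℤ) :
    dOp lam ga i 1 = lam ^ i • (sVar + MvPolynomial.C ((i : ℂ) * ga)) := by
  simp [dOp, shiftST]

lemma dOp_apply_one_ne_zero {lam : ℂ} (hlam : lam ≠ 0) (ga : ℂ) (i : ℤ) :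
    dOp lam ga i 1 ≠ 0 := by
  rw [dOp_apply_one]
  refine smul_ne_zero (zpow_ne_zero i hlam) fun h => ?_
  have h_coeff := congrArg (MvPolynomial.coeff (Finsupp.single 0 1)) h
  rw [MvPolynomial.coeff_add, MvPolynomial.coeff_C, sVar, MvPolynomial.coeff_X] at h_coeff
  simp [(Finsupp.single_ne_zero.mpr one_ne_zero).symm] at h_coeff

lemma TensorProduct.tmul_ne_zero {K M N : Type*} [Field K] [AddCommGroup M] [Module K M]
    [AddCommGroup N] [Module K N] {m : M} {n : N} (hm : m ≠ 0) (hn : n ≠ 0) :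
    m ⊗ₜ[K] n ≠ 0 := by
  obtain ⟨g, hg⟩ : ∃ g : Module.Dual K M, g m ≠ 0 := by
    by_contra! h
    exact hm ((Module.forall_dual_apply_eq_zero_iff K m).mp h)
  intro h
  have h_contract := congrArg (TensorProduct.lid K N ∘ LinearMap.rTensor N g) h
  simp only [Function.comp_apply, LinearMap.rTensor_tmul, TensorProduct.lid_tmul,
    map_zero, smul_eq_zero] at h_contract
  exact h_contract.elim hg hn

lemma lie_tmul_ne_zero_of_lie_eq_zero {K L M N : Type*} [Field K] [LieRing L] [LieAlgebra K L]
    [AddCommGroup M] [Module K M] [LieRingModule L M] [LieModule K L M]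
    [AddCommGroup N] [Module K N] [LieRingModule L N] [LieModule K L N]
    {x : L} {m : M} {n : N} (hm : ⁅x, m⁆ ≠ 0) (hxn : ⁅x, n⁆ = 0) (hn : n ≠ 0) :
    ⁅x, m ⊗ₜ[K] n⁆ ≠ 0 := by
  rw [TensorProduct.LieModule.lie_tmul_right, hxn, TensorProduct.tmul_zero, add_zero]
  exact TensorProduct.tmul_ne_zero hm hn

theorem stmt_12_general {L : Type} [LieRing L] [LieAlgebra ℂ L] (A : AVAlgebra L)
    (lam al be ga eta eps th : ℂ) (hlam : lam ≠ 0)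
    (M : Type) [AddCommGroup M] [Module ℂ M] [LieRingModule L M] [LieModule ℂ L M] (φ : M ≃ₗ[ℂ] Pst)
    (hM : IsOmega A lam al be ga M φ ∨ IsDelta A lam al be ga M φ ∨
      IsTheta A lam al be ga M φ)
    (V : Type) [AddCommGroup V] [Module ℂ V] [LieRingModule L V] [LieModule ℂ L V] (hV : IsIrrHW A V eta eps th)
    (W : Type) [AddCommGroup W] [Module ℂ W] [LieRingModule L W]
    (hW : ∀ w : W, ∃ i : ℤ, 1 ≤ i ∧ ⁅A.d i, w⁆ = 0) :
    IsEmpty (W ≃ₗ⁅ℂ,L⁆ (M ⊗[ℂ] V)) := by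
  obtain ⟨-, v, hv, -, -, hv_hw, -⟩ := hV
  have hd : ∀ (i : ℤ) (m : M), φ ⁅A.d i, m⁆ = dOp lam ga i (φ m) := by
    rcases hM with h | h | h <;> exact h.2.2.2.1
  have hd_one : ∀ i : ℤ, ⁅A.d i, φ.symm 1⁆ ≠ 0 := fun i h =>
    dOp_apply_one_ne_zero hlam ga i (by rw [← φ.apply_symm_apply 1, ← hd, h, map_zero])
  refine ⟨fun ψ => ?_⟩
  obtain ⟨i, hi, hiw⟩ := hW (ψ.symm (φ.symm 1 ⊗ₜ[ℂ] v))
  refine lie_tmul_ne_zero_of_lie_eq_zero (K := ℂ) (hd_one i) (hv_hw i hi).2.2.2 hv ?_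
  have h := (ψ : W →ₗ⁅ℂ,L⁆ M ⊗[ℂ] V).map_lie (A.d i) (ψ.symm (φ.symm 1 ⊗ₜ[ℂ] v))
  rw [hiw, LieModuleEquiv.coe_toLieModuleHom, LieModuleEquiv.apply_symm_apply, map_zero] at h
  exact h.symm

/-- if every element of an 𝔏-module `W` is annihilated by some `d_i` with
`i ≥ 1`, then `W` is not isomorphic to `M(λ,α,β,γ) ⊗ V(η,ε,θ)`; in particular no Whittaker
module is. -/
theorem stmt_12 {L : Type} [LieRing L] [LieAlgebra ℂ L] (A : AVAlgebra L)
    (lam al be ga eta eps th : ℂ) (hlam : lam ≠ 0) (hal : al ≠ 0)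
    (hwt : (eta, eps, th) ≠ (0, 0, 0))
    (M : Type) [AddCommGroup M] [Module ℂ M] [LieRingModule L M] [LieModule ℂ L M] (φ : M ≃ₗ[ℂ] Pst)
    (hM : IsOmega A lam al be ga M φ ∨ IsDelta A lam al be ga M φ ∨
      IsTheta A lam al be ga M φ)
    (V : Type) [AddCommGroup V] [Module ℂ V] [LieRingModule L V] [LieModule ℂ L V] (hV : IsIrrHW A V eta eps th)
    (W : Type) [AddCommGroup W] [Module ℂ W] [LieRingModule L W] [LieModule ℂ L W]
    (hW : ∀ w : W, ∃ i : ℤ, 1 ≤ i ∧ ⁅A.d i, w⁆ = 0) :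
    IsEmpty (W ≃ₗ⁅ℂ,L⁆ (M ⊗[ℂ] V)) :=
  stmt_12_general A lam al be ga eta eps th hlam M φ hM V hV W hW

end
end
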